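/- Let h : ℝ^n → ℝ be differentiable with L_h-Lipschitz gradient ∇h and g : ℝ^n → ℝ be lower semicontinuous and ρ_g-weakly convex with the implicit Lipschitz subgradient property with constant L_g > 0. Let γ ∈ (0, 1/(ρ_g + L_h)), η ∈ (0, 2), and let β > 0 be a fixed penalty parameter. Assume b lies in the column space of A and σ̃ > 0 satisfies ‖Aᵀv‖² ≥ σ̃‖v‖² for every v in the column space of A; set c_{γ,A} := γ²σ̃, α := (2β + γη(1 − η/2))/(2c_{γ,A}β²), and a := γη(2 − η)/(4β). Let (x^k, z^k, λ^k) be LiMEAL iterates with constant penalty β_k = β and step size η, and define P_limeal^k := P_β(x^k, z^k, λ^k) + 4α(‖z^k − z^{k−1}‖² + γ²L_h²‖x^k − x^{k−1}‖²) for k ≥ 1. Then for every k ≥ 1: P_limeal^k − P_limeal^{k+1} ≥ ((1 − γ(ρ_g + L_h))/(2γ) − 4α((1 + γL_g)² + γ²L_h²))‖x^{k+1} − x^k‖² + ((1/(2γ))(2/η − 1) − 4α)‖z^{k+1} − z^k‖² + (a/β)‖λ^{k+1} − λ^k‖² + α(γ²L_h²‖x^k − x^{k−1}‖² + ‖z^k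 − z^{k−1}‖²). -/

import Mathlib

/-!
Each LiMEAL step is split into its three updates. The `x`-update minimizes a model that is
`(1/γ - ρ_g)`-strongly convex, so comparing its value at `x^{k+1}` and at `x^k`, together with the
descent lemma for `h`, lowers `P_β` by `(1 - γ(ρ_g + L_h))/(2γ) ‖Δx‖²`; the `λ`-update raises it by
`‖Δλ‖²/β`; the relaxation of `z` lowers it by `(2/η - 1)/(2γ) ‖Δz‖²`.

The rise caused by the dual step is paid for by the primal movement. Both `x^{k+1}` and `x^k` are
proximal points, and `γ⁻¹(w - Prox w)` is the Moreau-envelope gradient, so the implicit Lipschitz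
property bounds `γ‖Aᵀ(λ^{k+1} - λ^k)‖` by `‖z^k - z^{k-1}‖ + (1 + γL_g)‖Δx‖ + γL_h‖x^k - x^{k-1}‖`.
As `λ^{k+1} - λ^k = β(Ax^{k+1} - b)` lies in the range of `A`, `σ̃` turns this into a bound on
`‖Δλ‖²`, and `α` is chosen with `α γ² σ̃ = (1 + a)/β`, so that the bound is absorbed by the
differences of the terms `4α(…)` of the Lyapunov function.
-/

open scoped RealInnerProductSpace

/-- `P_β(x, z, λ) = f(x) + ⟨λ, Ax − b⟩ + (β/2)‖Ax − b‖² + (1/(2γ))‖x − z‖²`. -/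
noncomputable def Pfun {n m : ℕ} (f : EuclideanSpace ℝ (Fin n) → ℝ)
    (A : Matrix (Fin m) (Fin n) ℝ) (b : EuclideanSpace ℝ (Fin m)) (γ β : ℝ)
    (x z : EuclideanSpace ℝ (Fin n)) (lam : EuclideanSpace ℝ (Fin m)) : ℝ :=
  f x + ⟪lam, Matrix.toEuclideanLin A x - b⟫
    + β / 2 * ‖Matrix.toEuclideanLin A x - b‖ ^ 2 + 1 / (2 * γ) * ‖x - z‖ ^ 2

open Set Filter Topology

variable {E : Type*} [NormedAddCommGroup E] [InnerProductSpace ℝ E]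

theorem le_add_inner_add_sq_of_lipschitz_gradient [CompleteSpace E] {h : E → ℝ} {h' : E → E}
    {L : ℝ} (hh' : ∀ x, HasGradientAt h (h' x) x) (hL : ∀ x y, ‖h' x - h' y‖ ≤ L * ‖x - y‖)
    (x y : E) : h y ≤ h x + ⟪h' x, y - x⟫ + L / 2 * ‖y - x‖ ^ 2 := by
  set d := y - x
  let φ : ℝ → ℝ := fun t => h (x + t • d) - t * ⟪h' x, d⟫ - L * ‖d‖ ^ 2 * (t ^ 2 / 2)
  have hφ : ∀ t, HasDerivAt φ (⟪h' (x + t • d) - h' x, d⟫ - L * ‖d‖ ^ 2 * t) t := by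
    intro t
    have hline : HasDerivAt (fun t : ℝ => x + t • d) d t := by
      simpa using ((hasDerivAt_id t).smul_const d).const_add x
    have hcomp := (hh' (x + t • d)).hasFDerivAt.comp_hasDerivAt t hline
    have hquad := ((hasDerivAt_pow 2 t).div_const 2).const_mul (L * ‖d‖ ^ 2)
    refine ((hcomp.sub ((hasDerivAt_id t).mul_const ⟪h' x, d⟫)).sub hquad).congr_deriv ?_
    simp only [InnerProductSpace.toDual_apply_apply, inner_sub_left]
    ring
  have hanti : AntitoneOn φ (Icc 0 1) := by
    refine antitoneOn_of_hasDerivWithinAt_nonpos (convex_Icc 0 1)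
      (fun t _ => (hφ t).continuousAt.continuousWithinAt) (fun t _ => (hφ t).hasDerivWithinAt)
      fun t ht => ?_
    rw [interior_Icc] at ht
    have hlip : ‖h' (x + t • d) - h' x‖ ≤ L * (t * ‖d‖) := by
      simpa [norm_smul, abs_of_pos ht.1] using hL (x + t • d) x
    nlinarith [real_inner_le_norm (h' (x + t • d) - h' x) d, norm_nonneg d]
  have h01 := hanti (left_mem_Icc.2 zero_le_one) (right_mem_Icc.2 zero_le_one) zero_le_one
  simp only [φ, one_smul, zero_smul, add_zero] at h01
  rw [show x + d = y by simp [d]] at h01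
  linarith

theorem StrongConvexOn.add_le_of_isMinOn {s : Set E} {f : E → ℝ} {m : ℝ}
    (hf : StrongConvexOn s m f) {x y : E} (hx : x ∈ s) (hy : y ∈ s) (hmin : IsMinOn f s x) :
    f x + m / 2 * ‖y - x‖ ^ 2 ≤ f y := by
  have hsmall : ∀ t ∈ Ioo (0 : ℝ) 1, f x + (1 - t) * (m / 2 * ‖y - x‖ ^ 2) ≤ f y := by
    rintro t ⟨ht0, ht1⟩
    have hconv := hf.2 hx hy (by linarith : 0 ≤ 1 - t) ht0.le (by ring)
    have hle := hmin (hf.1 hx hy (by linarith : 0 ≤ 1 - t) ht0.le (by ring))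
    rw [norm_sub_rev] at hconv
    simp only [smul_eq_mul, mem_ofPred_eq] at hconv hle
    nlinarith
  have hlim : Tendsto (fun t : ℝ => f x + (1 - t) * (m / 2 * ‖y - x‖ ^ 2)) (𝓝[>] 0)
      (𝓝 (f x + m / 2 * ‖y - x‖ ^ 2)) := by
    refine tendsto_nhdsWithin_of_tendsto_nhds (Continuous.tendsto' ?_ 0 _ ?_)
    · fun_prop
    · simp
  exact le_of_tendsto hlim (eventually_of_mem (Ioo_mem_nhdsGT zero_lt_one) hsmall)

theorem strongConvexOn_add_add_sq_norm_sub {g ℓ : E → ℝ} {ρ : ℝ}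
    (hg : ConvexOn ℝ univ fun x => g x + ρ / 2 * ‖x‖ ^ 2) (hℓ : ConvexOn ℝ univ ℓ)
    (γ : ℝ) (z : E) :
    StrongConvexOn univ (1 / γ - ρ) fun v => g v + ℓ v + 1 / (2 * γ) * ‖v - z‖ ^ 2 := by
  rw [strongConvexOn_iff_convex]
  have hlin : ConvexOn ℝ univ fun v => (-γ⁻¹ • innerSL ℝ z) v + ‖z‖ ^ 2 / (2 * γ) :=
    ((-γ⁻¹ • innerSL ℝ z).toLinearMap.convexOn convex_univ).add_const _
  refine ((hg.add hℓ).add hlin).congr fun v _ => ?_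
  simp only [Pi.add_apply, smul_apply, innerSL_apply_apply, smul_eq_mul,
    norm_sub_sq_real, real_inner_comm z v]
  ring

theorem convexOn_inner_add_sq_norm_sub {F : Type*} [NormedAddCommGroup F] [InnerProductSpace ℝ F]
    (A : E →ₗ[ℝ] F) (lam b : F) {β : ℝ} (hβ : 0 ≤ β) :
    ConvexOn ℝ univ fun v => ⟪lam, A v - b⟫ + β / 2 * ‖A v - b‖ ^ 2 := by
  have hF : ConvexOn ℝ univ fun u : F => ⟪lam, u⟫ + β / 2 * ‖u‖ ^ 2 :=
    ((innerSL ℝ lam).toLinearMap.convexOn convex_univ).add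
      ((convexOn_univ_norm.pow (fun _ _ => norm_nonneg _) 2).smul (by positivity : 0 ≤ β / 2))
  exact hF.comp_affineMap (A.toAffineMap - AffineMap.const ℝ E b)

theorem add_le_sub_of_isMin_linearization [CompleteSpace E] {h φ : E → ℝ} {h' : E → E}
    {L μ : ℝ} (hh' : ∀ x, HasGradientAt h (h' x) x) (hL : ∀ x y, ‖h' x - h' y‖ ≤ L * ‖x - y‖)
    (hφ : StrongConvexOn univ μ φ) {x y : E}
    (hmin : ∀ w, h x + ⟪h' x, y - x⟫ + φ y ≤ h x + ⟪h' x, w - x⟫ + φ w) :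
    h y + φ y ≤ h x + φ x - (μ - L) / 2 * ‖y - x‖ ^ 2 := by
  have hmodel : StrongConvexOn univ μ fun v => h x + ⟪h' x, v - x⟫ + φ v := by
    rw [strongConvexOn_iff_convex] at hφ ⊢
    have haff : ConvexOn ℝ univ fun v => innerSL ℝ (h' x) v + (h x - ⟪h' x, x⟫) :=
      ((innerSL ℝ (h' x)).toLinearMap.convexOn convex_univ).add_const _
    refine (haff.add hφ).congr fun v _ => ?_
    simp only [Pi.add_apply, innerSL_apply_apply, inner_sub_right]
    ring
  have hgrowth := hmodel.add_le_of_isMinOn (mem_univ y) (mem_univ x)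
    fun w _ => hmin w
  have hdescent := le_add_inner_add_sq_of_lipschitz_gradient hh' hL x y
  rw [norm_sub_rev] at hgrowth
  simp only [sub_self, inner_zero_right, add_zero] at hgrowth
  linarith

theorem mul_norm_sub_le_of_eq_prox {prox : E → E} {γ Lg : ℝ} (hγ : 0 < γ)
    (hlip : ∀ w w', ‖γ⁻¹ • (w - prox w) - γ⁻¹ • (w' - prox w')‖ ≤ Lg * ‖prox w - prox w'‖)
    {x x' z z' p p' : E} (hx : x = prox (z - γ • p)) (hx' : x' = prox (z' - γ • p')) :
    γ * ‖p - p'‖ ≤ ‖z - z'‖ + (1 + γ * Lg) * ‖x - x'‖ := by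
  set D := γ⁻¹ • (z - γ • p - prox (z - γ • p)) - γ⁻¹ • (z' - γ • p' - prox (z' - γ • p'))
  have hD : ‖D‖ ≤ Lg * ‖x - x'‖ := hx ▸ hx' ▸ hlip _ _
  have hγD : γ • D = (z - γ • p - x) - (z' - γ • p' - x') := by
    simp only [D]
    rw [smul_sub γ, smul_inv_smul₀ hγ.ne', smul_inv_smul₀ hγ.ne', hx, hx']
  have hid : γ • (p - p') = (z - z') - (x - x') - γ • D := by
    rw [hγD, smul_sub]
    abel
  calc γ * ‖p - p'‖ = ‖γ • (p - p')‖ := by rw [norm_smul, Real.norm_of_nonneg hγ.le]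
    _ ≤ ‖z - z'‖ + ‖x - x'‖ + ‖γ • D‖ := by
      rw [hid]
      exact (norm_sub_le _ _).trans (by gcongr; exact norm_sub_le _ _)
    _ = ‖z - z'‖ + ‖x - x'‖ + γ * ‖D‖ := by rw [norm_smul, Real.norm_of_nonneg hγ.le]
    _ ≤ ‖z - z'‖ + (1 + γ * Lg) * ‖x - x'‖ := by nlinarith

theorem sq_mul_norm_sub_le_of_eq_prox {F : Type*} {prox : E → E} {h' : E → E} {T : F → E}
    {γ Lg Lh : ℝ} (hγ : 0 < γ)
    (hlip : ∀ w w', ‖γ⁻¹ • (w - prox w) - γ⁻¹ • (w' - prox w')‖ ≤ Lg * ‖prox w - prox w'‖)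
    {x x' y y' z z' : E} {μ μ' : F} (hLh : ‖h' y - h' y'‖ ≤ Lh * ‖y - y'‖)
    (hx : x = prox (z - γ • (h' y + T μ))) (hx' : x' = prox (z' - γ • (h' y' + T μ'))) :
    (γ * ‖T μ - T μ'‖) ^ 2
      ≤ 3 * (‖z - z'‖ ^ 2 + (1 + γ * Lg) ^ 2 * ‖x - x'‖ ^ 2 + γ ^ 2 * Lh ^ 2 * ‖y - y'‖ ^ 2) := by
  have hp := mul_norm_sub_le_of_eq_prox hγ hlip hx hx'
  have hsplit : T μ - T μ' = (h' y + T μ - (h' y' + T μ')) - (h' y - h' y') := by abel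
  have hlin : γ * ‖T μ - T μ'‖
      ≤ ‖z - z'‖ + (1 + γ * Lg) * ‖x - x'‖ + γ * Lh * ‖y - y'‖ := by
    rw [hsplit]
    nlinarith [norm_sub_le (h' y + T μ - (h' y' + T μ')) (h' y - h' y')]
  calc (γ * ‖T μ - T μ'‖) ^ 2
      ≤ (‖z - z'‖ + (1 + γ * Lg) * ‖x - x'‖ + γ * Lh * ‖y - y'‖) ^ 2 := by
        gcongr
    _ ≤ _ := by
      nlinarith [sq_nonneg (‖z - z'‖ - (1 + γ * Lg) * ‖x - x'‖),
        sq_nonneg (‖z - z'‖ - γ * Lh * ‖y - y'‖),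
        sq_nonneg ((1 + γ * Lg) * ‖x - x'‖ - γ * Lh * ‖y - y'‖)]

theorem sub_mem_range_of_eq_add_smul {F G : Type*} [AddCommGroup F] [Module ℝ F]
    [AddCommGroup G] [Module ℝ G] {T : F →ₗ[ℝ] G} {b lam lam' : G} {x : F} {β : ℝ}
    (hb : b ∈ LinearMap.range T) (hlam : lam' = lam + β • (T x - b)) :
    lam' - lam ∈ LinearMap.range T := by
  obtain ⟨v, rfl⟩ := hb
  exact ⟨β • (x - v), by rw [hlam, add_sub_cancel_left, map_smul, map_sub]⟩

theorem Pfun_le_sub_of_isMin_linearization {n m : ℕ} {A : Matrix (Fin m) (Fin n) ℝ}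
    {b : EuclideanSpace ℝ (Fin m)} {γ β : ℝ} {h g : EuclideanSpace ℝ (Fin n) → ℝ}
    {h' : EuclideanSpace ℝ (Fin n) → EuclideanSpace ℝ (Fin n)} {ρ L : ℝ}
    (hγ : γ ≠ 0) (hβ : 0 ≤ β) (hh' : ∀ x, HasGradientAt h (h' x) x)
    (hL : ∀ x y, ‖h' x - h' y‖ ≤ L * ‖x - y‖)
    (hg : ConvexOn ℝ univ fun x => g x + ρ / 2 * ‖x‖ ^ 2)
    {lam : EuclideanSpace ℝ (Fin m)} {x y z : EuclideanSpace ℝ (Fin n)}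
    (hmin : ∀ w, h x + ⟪h' x, y - x⟫ + g y + ⟪lam, Matrix.toEuclideanLin A y - b⟫
          + β / 2 * ‖Matrix.toEuclideanLin A y - b‖ ^ 2 + 1 / (2 * γ) * ‖y - z‖ ^ 2
        ≤ h x + ⟪h' x, w - x⟫ + g w + ⟪lam, Matrix.toEuclideanLin A w - b⟫
          + β / 2 * ‖Matrix.toEuclideanLin A w - b‖ ^ 2 + 1 / (2 * γ) * ‖w - z‖ ^ 2) :
    Pfun (fun v => h v + g v) A b γ β y z lam
      ≤ Pfun (fun v => h v + g v) A b γ β x z lam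
        - (1 - γ * (ρ + L)) / (2 * γ) * ‖y - x‖ ^ 2 := by
  have hφ := strongConvexOn_add_add_sq_norm_sub hg
    (convexOn_inner_add_sq_norm_sub (Matrix.toEuclideanLin A) lam b hβ) γ z
  have hdescent := add_le_sub_of_isMin_linearization hh' hL hφ (x := x) (y := y)
    fun w => by linarith [hmin w]
  have hcoeff : (1 - γ * (ρ + L)) / (2 * γ) = (1 / γ - ρ - L) / 2 := by
    field_simp
    ring
  simp only [Pfun, hcoeff]
  linarith

section Updates

variable {n m : ℕ} (f : EuclideanSpace ℝ (Fin n) → ℝ) (A : Matrix (Fin m) (Fin n) ℝ)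
  (b : EuclideanSpace ℝ (Fin m)) (γ β : ℝ)

theorem Pfun_dual_update (z : EuclideanSpace ℝ (Fin n)) {x : EuclideanSpace ℝ (Fin n)}
    {lam lam' : EuclideanSpace ℝ (Fin m)}
    (hlam : lam' = lam + β • (Matrix.toEuclideanLin A x - b)) :
    Pfun f A b γ β x z lam' = Pfun f A b γ β x z lam + 1 / β * ‖lam' - lam‖ ^ 2 := by
  have hstep : lam' - lam = β • (Matrix.toEuclideanLin A x - b) := by
    rw [hlam, add_sub_cancel_left]
  simp only [Pfun]
  rw [hstep, hlam, inner_add_left, real_inner_smul_left, real_inner_self_eq_norm_sq, norm_smul,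
    Real.norm_eq_abs, mul_pow, sq_abs]
  field_simp
  ring

theorem Pfun_relaxation {η : ℝ} (hη : η ≠ 0)
    {x z z' : EuclideanSpace ℝ (Fin n)} (lam : EuclideanSpace ℝ (Fin m))
    (hz : z' = z - η • (z - x)) :
    Pfun f A b γ β x z' lam
      = Pfun f A b γ β x z lam - 1 / (2 * γ) * (2 / η - 1) * ‖z' - z‖ ^ 2 := by
  have hxz' : x - z' = (1 - η) • (x - z) := by rw [hz]; module
  have hz'z : z' - z = η • (x - z) := by rw [hz]; module
  simp only [Pfun, hxz', hz'z, norm_smul, Real.norm_eq_abs, mul_pow, sq_abs]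
  field_simp
  ring

end Updates

theorem stmt_18_general (n m : ℕ) (A : Matrix (Fin m) (Fin n) ℝ) (b : EuclideanSpace ℝ (Fin m))
    (h : EuclideanSpace ℝ (Fin n) → ℝ)
    (h' : EuclideanSpace ℝ (Fin n) → EuclideanSpace ℝ (Fin n))
    (g : EuclideanSpace ℝ (Fin n) → ℝ) (ρg γ η Lh Lg β σ α a : ℝ)
    (hγ0 : 0 < γ) (hη0 : 0 < η) (hη2 : η < 2)
    (hβ : 0 < β) (hσ : 0 < σ)
    (hh' : ∀ x, HasGradientAt h (h' x) x)
    (hLh : ∀ x y, ‖h' x - h' y‖ ≤ Lh * ‖x - y‖)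
    (hwc : ConvexOn ℝ Set.univ fun x => g x + ρg / 2 * ‖x‖ ^ 2)
    (prox : EuclideanSpace ℝ (Fin n) → EuclideanSpace ℝ (Fin n))
    (hlip : ∀ w w', ‖γ⁻¹ • (w - prox w) - γ⁻¹ • (w' - prox w')‖
        ≤ Lg * ‖prox w - prox w'‖)
    (hb : b ∈ LinearMap.range (Matrix.toEuclideanLin A))
    (hσA : ∀ v ∈ LinearMap.range (Matrix.toEuclideanLin A),
      σ * ‖v‖ ^ 2 ≤ ‖Matrix.toEuclideanLin A.transpose v‖ ^ 2)
    (hαdef : α = (2 * β + γ * η * (1 - η / 2)) / (2 * (γ ^ 2 * σ) * β ^ 2))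
    (hadef : a = γ * η * (2 - η) / (4 * β))
    (x z : ℕ → EuclideanSpace ℝ (Fin n)) (lam : ℕ → EuclideanSpace ℝ (Fin m))
    (hxmin : ∀ k x',
      h (x k) + ⟪h' (x k), x (k + 1) - x k⟫ + g (x (k + 1))
          + ⟪lam k, Matrix.toEuclideanLin A (x (k + 1)) - b⟫
          + β / 2 * ‖Matrix.toEuclideanLin A (x (k + 1)) - b‖ ^ 2
          + 1 / (2 * γ) * ‖x (k + 1) - z k‖ ^ 2
        ≤ h (x k) + ⟪h' (x k), x' - x k⟫ + g x'
          + ⟪lam k, Matrix.toEuclideanLin A x' - b⟫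
          + β / 2 * ‖Matrix.toEuclideanLin A x' - b‖ ^ 2
          + 1 / (2 * γ) * ‖x' - z k‖ ^ 2)
    (hz : ∀ k, z (k + 1) = z k - η • (z k - x (k + 1)))
    (hlam : ∀ k, lam (k + 1) = lam k + β • (Matrix.toEuclideanLin A (x (k + 1)) - b))
    (hprox : ∀ k, x (k + 1)
        = prox (z k - γ • (h' (x k) + Matrix.toEuclideanLin A.transpose (lam (k + 1))))) :
    ∀ k, 1 ≤ k →
      (Pfun (fun v => h v + g v) A b γ β (x k) (z k) (lam k)
            + 4 * α * (‖z k - z (k - 1)‖ ^ 2 + γ ^ 2 * Lh ^ 2 * ‖x k - x (k - 1)‖ ^ 2))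
          - (Pfun (fun v => h v + g v) A b γ β (x (k + 1)) (z (k + 1)) (lam (k + 1))
            + 4 * α * (‖z (k + 1) - z k‖ ^ 2 + γ ^ 2 * Lh ^ 2 * ‖x (k + 1) - x k‖ ^ 2))
        ≥ ((1 - γ * (ρg + Lh)) / (2 * γ)
              - 4 * α * ((1 + γ * Lg) ^ 2 + γ ^ 2 * Lh ^ 2)) * ‖x (k + 1) - x k‖ ^ 2
          + (1 / (2 * γ) * (2 / η - 1) - 4 * α) * ‖z (k + 1) - z k‖ ^ 2
          + a / β * ‖lam (k + 1) - lam k‖ ^ 2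
          + α * (γ ^ 2 * Lh ^ 2 * ‖x k - x (k - 1)‖ ^ 2 + ‖z k - z (k - 1)‖ ^ 2) := by
  intro k hk
  obtain ⟨j, rfl⟩ := Nat.exists_eq_add_of_le' hk
  simp only [Nat.add_sub_cancel]
  have hα : 0 ≤ α := by
    have : 0 < 1 - η / 2 := by linarith
    rw [hαdef]
    positivity
  have hαγσ : α * (γ ^ 2 * σ) = 1 / β + a / β := by
    rw [hαdef, hadef]
    field_simp
    ring
  have hprimal := Pfun_le_sub_of_isMin_linearization hγ0.ne' hβ.le hh' hLh hwc (hxmin (j + 1))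
  have hdual := Pfun_dual_update (fun v => h v + g v) A b γ β (z (j + 1)) (hlam (j + 1))
  have hrelax :=
    Pfun_relaxation (fun v => h v + g v) A b γ β hη0.ne' (lam (j + 1 + 1)) (hz (j + 1))
  have hbound : (1 / β + a / β) * ‖lam (j + 1 + 1) - lam (j + 1)‖ ^ 2
      ≤ α * (3 * (‖z (j + 1) - z j‖ ^ 2 + (1 + γ * Lg) ^ 2 * ‖x (j + 1 + 1) - x (j + 1)‖ ^ 2
        + γ ^ 2 * Lh ^ 2 * ‖x (j + 1) - x j‖ ^ 2)) :=
    calc _ = α * (γ ^ 2 * (σ * ‖lam (j + 1 + 1) - lam (j + 1)‖ ^ 2)) := by rw [← hαγσ]; ring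
      _ ≤ α * (γ * ‖Matrix.toEuclideanLin A.transpose (lam (j + 1 + 1))
            - Matrix.toEuclideanLin A.transpose (lam (j + 1))‖) ^ 2 := by
        rw [← map_sub, mul_pow]
        gcongr
        exact hσA _ (sub_mem_range_of_eq_add_smul hb (hlam (j + 1)))
      _ ≤ _ := by
        gcongr
        exact sq_mul_norm_sub_le_of_eq_prox hγ0 hlip (hLh _ _) (hprox (j + 1)) (hprox j)
  linarith [mul_nonneg hα (sq_nonneg ((1 + γ * Lg) * ‖x (j + 1 + 1) - x (j + 1)‖))]

/-- Sufficient-descent property of the LiMEAL Lyapunov function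
`P_limeal^k = P_β(x^k, z^k, λ^k) + 4α(‖z^k − z^{k−1}‖² + γ²L_h²‖x^k − x^{k−1}‖²)`. -/
theorem stmt_18 (n m : ℕ) (A : Matrix (Fin m) (Fin n) ℝ) (b : EuclideanSpace ℝ (Fin m))
    (h : EuclideanSpace ℝ (Fin n) → ℝ)
    (h' : EuclideanSpace ℝ (Fin n) → EuclideanSpace ℝ (Fin n))
    (g : EuclideanSpace ℝ (Fin n) → ℝ) (ρg γ η Lh Lg β σ α a : ℝ)
    (hρg : 0 < ρg) (hγ0 : 0 < γ) (hγ : γ < 1 / (ρg + Lh)) (hη0 : 0 < η) (hη2 : η < 2)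
    (hLg : 0 < Lg) (hβ : 0 < β) (hσ : 0 < σ)
    (hh' : ∀ x, HasGradientAt h (h' x) x)
    (hLh : ∀ x y, ‖h' x - h' y‖ ≤ Lh * ‖x - y‖)
    (hlsc : LowerSemicontinuous g)
    (hwc : ConvexOn ℝ Set.univ fun x => g x + ρg / 2 * ‖x‖ ^ 2)
    (prox : EuclideanSpace ℝ (Fin n) → EuclideanSpace ℝ (Fin n))
    (hproxmin : ∀ w x, g (prox w) + 1 / (2 * γ) * ‖prox w - w‖ ^ 2
        ≤ g x + 1 / (2 * γ) * ‖x - w‖ ^ 2)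
    (hproxuniq : ∀ w x, (∀ y, g x + 1 / (2 * γ) * ‖x - w‖ ^ 2
        ≤ g y + 1 / (2 * γ) * ‖y - w‖ ^ 2) → x = prox w)
    (hlip : ∀ w w', ‖γ⁻¹ • (w - prox w) - γ⁻¹ • (w' - prox w')‖
        ≤ Lg * ‖prox w - prox w'‖)
    (hb : b ∈ LinearMap.range (Matrix.toEuclideanLin A))
    (hσA : ∀ v ∈ LinearMap.range (Matrix.toEuclideanLin A),
      σ * ‖v‖ ^ 2 ≤ ‖Matrix.toEuclideanLin A.transpose v‖ ^ 2)
    (hαdef : α = (2 * β + γ * η * (1 - η / 2)) / (2 * (γ ^ 2 * σ) * β ^ 2))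
    (hadef : a = γ * η * (2 - η) / (4 * β))
    (x z : ℕ → EuclideanSpace ℝ (Fin n)) (lam : ℕ → EuclideanSpace ℝ (Fin m))
    (hxmin : ∀ k x',
      h (x k) + ⟪h' (x k), x (k + 1) - x k⟫ + g (x (k + 1))
          + ⟪lam k, Matrix.toEuclideanLin A (x (k + 1)) - b⟫
          + β / 2 * ‖Matrix.toEuclideanLin A (x (k + 1)) - b‖ ^ 2
          + 1 / (2 * γ) * ‖x (k + 1) - z k‖ ^ 2
        ≤ h (x k) + ⟪h' (x k), x' - x k⟫ + g x'
          + ⟪lam k, Matrix.toEuclideanLin A x' - b⟫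
          + β / 2 * ‖Matrix.toEuclideanLin A x' - b‖ ^ 2
          + 1 / (2 * γ) * ‖x' - z k‖ ^ 2)
    (hz : ∀ k, z (k + 1) = z k - η • (z k - x (k + 1)))
    (hlam : ∀ k, lam (k + 1) = lam k + β • (Matrix.toEuclideanLin A (x (k + 1)) - b))
    (hprox : ∀ k, x (k + 1)
        = prox (z k - γ • (h' (x k) + Matrix.toEuclideanLin A.transpose (lam (k + 1))))) :
    ∀ k, 1 ≤ k →
      (Pfun (fun v => h v + g v) A b γ β (x k) (z k) (lam k)
            + 4 * α * (‖z k - z (k - 1)‖ ^ 2 + γ ^ 2 * Lh ^ 2 * ‖x k - x (k - 1)‖ ^ 2))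
          - (Pfun (fun v => h v + g v) A b γ β (x (k + 1)) (z (k + 1)) (lam (k + 1))
            + 4 * α * (‖z (k + 1) - z k‖ ^ 2 + γ ^ 2 * Lh ^ 2 * ‖x (k + 1) - x k‖ ^ 2))
        ≥ ((1 - γ * (ρg + Lh)) / (2 * γ)
              - 4 * α * ((1 + γ * Lg) ^ 2 + γ ^ 2 * Lh ^ 2)) * ‖x (k + 1) - x k‖ ^ 2
          + (1 / (2 * γ) * (2 / η - 1) - 4 * α) * ‖z (k + 1) - z k‖ ^ 2
          + a / β * ‖lam (k + 1) - lam k‖ ^ 2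
          + α * (γ ^ 2 * Lh ^ 2 * ‖x k - x (k - 1)‖ ^ 2 + ‖z k - z (k - 1)‖ ^ 2) :=
  stmt_18_general n m A b h h' g ρg γ η Lh Lg β σ α a hγ0 hη0 hη2 hβ hσ hh' hLh hwc prox hlip hb hσA
    hαdef hadef x z lam hxmin hz hlam hprox
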